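/- If P = (y+2m, y | b_1,...,b_n | -y) is an Ulrich partition of type (2,n,1) of dimension 2y + m - 1, then its elongation E(P) is an Ulrich partition of type (2, n+2m, 1) of dimension 2(y+3m) + m - 1. Consequently E^k(F_m) is Ulrich of type (2, 2mk + m - 1, 1) for all k ≥ 0. -/

import Mathlib

/-- A list of integers is strictly decreasing. -/
def StrictDec (l : List ℤ) : Prop := l.Chain' (· > ·)

/-- Time evolution of a three-block partition `(A | B | C)`: subtract `t` from each entry of
the first block, keep the middle block fixed, add `t` to each entry of the last block. -/
def evolve3 (A B C : List ℤ) (t : ℤ) : List ℤ := A.map (· - t) ++ B ++ C.map (· + t)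

/-- A list has exactly one repeated entry: the number of distinct values is one less
than the length. -/
def OneRepeat (l : List ℤ) : Prop := l.toFinset.card + 1 = l.length

/-- The dimension of a three-block partition of type `(α, β, γ)` is `αβ + αγ + βγ`. -/
def dim3 (A B C : List ℤ) : ℕ := A.length * B.length + A.length * C.length + B.length * C.length

/-- A three-block partition is Ulrich: it is a strictly decreasing sequence (with nonempty
outer blocks), and for every time `t ∈ {1, ..., N}` (N the dimension) the evolved list `P(t)`
has exactly one repeated entry. -/
def IsUlrich3 (A B C : List ℤ) : Prop :=
  A ≠ [] ∧ C ≠ [] ∧ StrictDec (evolve3 A B C 0) ∧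
    ∀ t : ℕ, 1 ≤ t → t ≤ dim3 A B C → OneRepeat (evolve3 A B C (t : ℤ))
/-- The middle block of the fundamental pattern `F_m = (3m, m | m-1, ..., 1 | -m)`. -/
def Fb (m : ℕ) : List ℤ := (List.range (m - 1)).map (fun i => (m : ℤ) - 1 - i)

/-- Middle block of the elongation of `(y+2m, y | b | -y)`: insert the contiguous block
`y+3m-1, ..., y+2m` before `b` and the contiguous block `-y-m, ..., -y-2m+1` after it. -/
def elongB (y : ℤ) (m : ℕ) (b : List ℤ) : List ℤ :=
  ((List.range m).map (fun i => y + 3 * m - 1 - i)) ++ b ++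
    ((List.range m).map (fun i => -y - m - i))

/-- The value of `y` for the `k`-th elongation `E^k(F_m)`: `y = m + 3mk`. -/
def yk (m k : ℕ) : ℤ := (m : ℤ) + 3 * m * k

/-- The middle block of `E^k(F_m)`. -/
def EkB (m : ℕ) : ℕ → List ℤ
  | 0 => Fb m
  | k + 1 => elongB (yk m k) m (EkB m k)

/-- The first block of `E^k(F_m)`. -/
def EkA (m k : ℕ) : List ℤ := [yk m k + 2 * m, yk m k]

/-- The last block of `E^k(F_m)`. -/
def EkC (m k : ℕ) : List ℤ := [-(yk m k)]

/-!
At time `t` the moving entries of `(a₁, a₂ | B | c)` are `a₁ - t`, `a₂ - t`, `c + t`, so a repeat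
at time `t` forces `t` to be a collision time: `a₁ - b`, `a₂ - b` or `b - c` for some `b ∈ B`, or
`(aᵢ - c) / 2`. There are at most `3n + 2 = N` of these, so for an Ulrich partition they are
exactly `1, ..., N`. For `P = (y + 2m, y | B | -y)` with `N = 2y + m - 1` this puts every entry
of `B` above `-y + m`, which keeps `B` clear of the two blocks inserted by the elongation. The
evolution of `E(P)` is then the evolution of `P` delayed by `3m`, with the inserted blocks inert,
preceded and followed by `3m` times at which exactly one moving entry crosses an inserted block.
-/

theorem OneRepeat.not_nodup {l : List ℤ} (h : OneRepeat l) : ¬ l.Nodup := fun hl => by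
  rw [OneRepeat, List.toFinset_card_of_nodup hl] at h
  omega

theorem OneRepeat.of_perm {l l' : List ℤ} (hp : l.Perm l') (h : OneRepeat l) : OneRepeat l' := by
  rwa [OneRepeat, ← hp.length_eq, ← List.toFinset_eq_of_perm _ _ hp]

theorem oneRepeat_cons {x : ℤ} {l : List ℤ} (hl : l.Nodup) (hx : x ∈ l) : OneRepeat (x :: l) := by
  rw [OneRepeat, List.toFinset_cons, Finset.insert_eq_of_mem (List.mem_toFinset.2 hx),
    List.toFinset_card_of_nodup hl, List.length_cons]

theorem OneRepeat.append_left {l E : List ℤ} (h : OneRepeat l) (hE : E.Nodup)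
    (hdisj : E.Disjoint l) : OneRepeat (E ++ l) := by
  rw [OneRepeat, List.toFinset_append,
    Finset.card_union_of_disjoint (List.disjoint_toFinset_iff_disjoint.2 hdisj),
    List.toFinset_card_of_nodup hE, List.length_append, ← h]
  omega

section PairAppendSingleton

variable {u v w : ℤ} {M : List ℤ}

theorem strictDec_pair_append_singleton_iff :
    StrictDec ([u, v] ++ M ++ [w]) ↔
      v < u ∧ M.Pairwise (· > ·) ∧ (∀ x ∈ M, x < v) ∧ (∀ x ∈ M, w < x) ∧ w < v := by
  rw [StrictDec, List.Chain', List.isChain_iff_pairwise]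
  simp only [List.pairwise_append, List.pairwise_cons, List.mem_cons, List.not_mem_nil,
    or_false, List.Pairwise.nil, gt_iff_lt, List.mem_append, IsEmpty.forall_iff, implies_true,
    and_true, or_imp, forall_and, forall_eq, true_and]
  constructor
  · rintro ⟨⟨hvu, hM, -, hMv⟩, ⟨-, hwv⟩, hwM⟩
    exact ⟨hvu, hM, hMv, hwM, hwv⟩
  · rintro ⟨hvu, hM, hMv, hwM, hwv⟩
    exact ⟨⟨hvu, hM, fun x hx => (hMv x hx).trans hvu, hMv⟩, ⟨hwv.trans hvu, hwv⟩, hwM⟩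

theorem oneRepeat_of_fst_mem (hM : M.Nodup) (hu : u ∈ M) (hv : v ∉ M) (hw : w ∉ M)
    (hvw : v ≠ w) : OneRepeat ([u, v] ++ M ++ [w]) :=
  oneRepeat_cons (by simp [List.nodup_append, hM, hv, hw, hvw, List.forall_mem_ne'])
    (by simp [hu])

theorem oneRepeat_of_snd_mem (hM : M.Nodup) (hv : v ∈ M) (hu : u ∉ M) (hw : w ∉ M)
    (huw : u ≠ w) : OneRepeat ([u, v] ++ M ++ [w]) :=
  (oneRepeat_cons (l := u :: (M ++ [w]))
    (by simp [List.nodup_append, hM, hu, hw, huw, List.forall_mem_ne'])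
    (by simp [hv])).of_perm (List.Perm.swap _ _ _)

theorem oneRepeat_of_mem_pair_append (h : ([u, v] ++ M).Nodup) (hw : w ∈ [u, v] ++ M) :
    OneRepeat ([u, v] ++ M ++ [w]) :=
  (oneRepeat_cons h hw).of_perm (List.perm_append_singleton _ _).symm

theorem nodup_pair_append (hM : M.Nodup) (hu : u ∉ M) (hv : v ∉ M) (huv : u ≠ v) :
    ([u, v] ++ M).Nodup := by
  simp [hM, hu, hv, huv]

theorem oneRepeat_of_last_mem (hM : M.Nodup) (hw : w ∈ M) (hu : u ∉ M) (hv : v ∉ M)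
    (huv : u ≠ v) : OneRepeat ([u, v] ++ M ++ [w]) :=
  oneRepeat_of_mem_pair_append (nodup_pair_append hM hu hv huv) (by simp [hw])

theorem perm_append_pair_append_append (E₁ E₂ : List ℤ) :
    (E₁ ++ E₂ ++ ([u, v] ++ M ++ [w])).Perm ([u, v] ++ (E₁ ++ M ++ E₂) ++ [w]) :=
  List.perm_iff_count.2 fun a => by
    simp only [List.count_append, List.count_cons, List.count_nil]
    omega

theorem OneRepeat.collision (hM : M.Nodup) (h : OneRepeat ([u, v] ++ M ++ [w])) :
    u ∈ M ∨ v ∈ M ∨ w ∈ M ∨ u = v ∨ u = w ∨ v = w := by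
  by_contra hc
  push Not at hc
  exact h.not_nodup (by simp [List.nodup_append, hM, hc, List.forall_mem_ne'])

end PairAppendSingleton

theorem evolve3_pair_singleton (a₁ a₂ c t : ℤ) (B : List ℤ) :
    evolve3 [a₁, a₂] B [c] t = [a₁ - t, a₂ - t] ++ B ++ [c + t] := by
  simp [evolve3]

theorem dim3_pair_singleton (a₁ a₂ c : ℤ) (B : List ℤ) :
    dim3 [a₁, a₂] B [c] = 3 * B.length + 2 := by
  simp [dim3]
  ring

section Collisions

variable {a₁ a₂ c : ℤ} {B : List ℤ}

def collisionTimes (a₁ a₂ c : ℤ) (B : List ℤ) : Finset ℤ :=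
  B.toFinset.image (a₁ - ·) ∪ B.toFinset.image (a₂ - ·) ∪ B.toFinset.image (· - c) ∪
    {(a₁ - c) / 2, (a₂ - c) / 2}

theorem card_collisionTimes_le : (collisionTimes a₁ a₂ c B).card ≤ 3 * B.length + 2 := by
  have hB := B.toFinset_card_le
  have himage (f : ℤ → ℤ) := (B.toFinset.card_image_le (f := f)).trans hB
  have hpair : ({(a₁ - c) / 2, (a₂ - c) / 2} : Finset ℤ).card ≤ 2 := Finset.card_le_two
  unfold collisionTimes
  grw [Finset.card_union_le, Finset.card_union_le, Finset.card_union_le, himage, himage, himage,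
    hpair]
  omega

theorem mem_collisionTimes_of_oneRepeat {t : ℤ} (hB : B.Nodup) (ha : a₁ ≠ a₂)
    (h : OneRepeat (evolve3 [a₁, a₂] B [c] t)) : t ∈ collisionTimes a₁ a₂ c B := by
  rw [evolve3_pair_singleton] at h
  simp only [collisionTimes, Finset.mem_union, Finset.mem_image, List.mem_toFinset,
    Finset.mem_insert, Finset.mem_singleton]
  rcases h.collision hB with h | h | h | h | h | h
  · exact Or.inl (Or.inl (Or.inl ⟨_, h, by ring⟩))
  · exact Or.inl (Or.inl (Or.inr ⟨_, h, by ring⟩))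
  · exact Or.inl (Or.inr ⟨_, h, by ring⟩)
  · omega
  · omega
  · omega

theorem IsUlrich3.collisionTimes_eq (h : IsUlrich3 [a₁, a₂] B [c]) :
    collisionTimes a₁ a₂ c B = Finset.Icc 1 (dim3 [a₁, a₂] B [c] : ℤ) := by
  obtain ⟨-, -, hdec, hrep⟩ := h
  rw [evolve3_pair_singleton, strictDec_pair_append_singleton_iff] at hdec
  refine (Finset.eq_of_subset_of_card_le (fun t ht => ?_) ?_).symm
  · rw [Finset.mem_Icc] at ht
    lift t to ℕ using (by omega)
    exact mem_collisionTimes_of_oneRepeat (hdec.2.1.imp ne_of_gt) (by linarith [hdec.1])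
      (hrep t (by omega) (by omega))
  · rw [Int.card_Icc, dim3_pair_singleton]
    have := card_collisionTimes_le (a₁ := a₁) (a₂ := a₂) (c := c) (B := B)
    omega

theorem IsUlrich3.sub_dim3_le_of_mem (h : IsUlrich3 [a₁, a₂] B [c]) {b : ℤ} (hb : b ∈ B) :
    a₁ - dim3 [a₁, a₂] B [c] ≤ b := by
  have : a₁ - b ∈ collisionTimes a₁ a₂ c B := by
    simp only [collisionTimes, Finset.mem_union, Finset.mem_image, List.mem_toFinset]
    exact Or.inl (Or.inl (Or.inl ⟨b, hb, rfl⟩))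
  rw [h.collisionTimes_eq, Finset.mem_Icc] at this
  omega

end Collisions

def descRun (a : ℤ) (m : ℕ) : List ℤ := (List.range m).map fun i : ℕ => a - i

section DescRun

variable {a : ℤ} {m : ℕ}

theorem mem_descRun {x : ℤ} : x ∈ descRun a m ↔ a - m < x ∧ x ≤ a := by
  simp only [descRun, List.mem_map, List.mem_range]
  constructor
  · rintro ⟨i, hi, rfl⟩
    omega
  · exact fun hx => ⟨(a - x).toNat, by omega, by omega⟩

theorem pairwise_descRun : (descRun a m).Pairwise (· > ·) :=
  List.pairwise_map.2 (List.pairwise_lt_range.imp fun h => by omega)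

theorem length_descRun : (descRun a m).length = m := by
  simp [descRun]

end DescRun

theorem elongB_eq_descRun (y : ℤ) (m : ℕ) (b : List ℤ) :
    elongB y m b = descRun (y + 3 * m - 1) m ++ b ++ descRun (-y - m) m := by
  simp only [elongB, descRun, bind_pure_comp, List.map_eq_map, List.map_map]
  rfl

theorem Fb_eq_descRun (m : ℕ) : Fb m = descRun (m - 1) (m - 1) := by
  simp only [Fb, descRun, bind_pure_comp, List.map_eq_map, List.map_map]
  rfl

section Elongation

variable {y : ℤ} {m : ℕ} {B : List ℤ}

theorem mem_elongB {x : ℤ} : x ∈ elongB y m B ↔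
    (y + 2 * m ≤ x ∧ x < y + 3 * m) ∨ x ∈ B ∨ (-y - 2 * m < x ∧ x ≤ -y - m) := by
  rw [elongB_eq_descRun]
  simp only [List.mem_append, mem_descRun, or_assoc]
  exact or_congr (by omega) (or_congr Iff.rfl (by omega))

theorem length_elongB : (elongB y m B).length = B.length + 2 * m := by
  simp only [elongB_eq_descRun, List.length_append, length_descRun]
  omega

theorem bounds_of_mem_elongB (hy : 0 < y) (hB : ∀ b ∈ B, -y + m < b ∧ b < y) {x : ℤ}
    (hx : x ∈ elongB y m B) : -y - 2 * m < x ∧ x < y + 3 * m := by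
  rcases mem_elongB.1 hx with h | h | h
  · omega
  · have := hB x h
    omega
  · omega

theorem not_mem_elongB (hy : 0 < y) (hB : ∀ b ∈ B, -y + m < b ∧ b < y) {x : ℤ}
    (hx : x ≤ -y - 2 * m ∨ (-y - m < x ∧ x ≤ -y + m) ∨ (y ≤ x ∧ x < y + 2 * m) ∨
      y + 3 * m ≤ x) :
    x ∉ elongB y m B := by
  intro hmem
  rcases mem_elongB.1 hmem with h | h | h
  · omega
  · have := hB x h
    omega
  · omega

theorem pairwise_elongB (hBp : B.Pairwise (· > ·)) (hy : 0 < y)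
    (hB : ∀ b ∈ B, -y + m < b ∧ b < y) :
    (elongB y m B).Pairwise (· > ·) := by
  rw [elongB_eq_descRun]
  refine List.pairwise_append.2 ⟨List.pairwise_append.2 ⟨pairwise_descRun, hBp, ?_⟩,
    pairwise_descRun, fun a ha b hb => ?_⟩
  · intro a ha b hb
    have := mem_descRun.1 ha
    have := hB b hb
    omega
  · have := mem_descRun.1 hb
    rcases List.mem_append.1 ha with h | h
    · have := mem_descRun.1 h
      omega
    · have := hB a h
      omega

theorem nodup_elongB (hBp : B.Pairwise (· > ·)) (hy : 0 < y)
    (hB : ∀ b ∈ B, -y + m < b ∧ b < y) :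
    (elongB y m B).Nodup :=
  (pairwise_elongB hBp hy hB).imp ne_of_gt

theorem oneRepeat_evolve3_elongB_of_le (hBp : B.Pairwise (· > ·))
    (hy : 0 < y) (hB : ∀ b ∈ B, -y + m < b ∧ b < y) {t : ℤ} (ht₀ : 1 ≤ t) (ht : t ≤ 3 * m) :
    OneRepeat (evolve3 [y + 5 * m, y + 3 * m] (elongB y m B) [-(y + 3 * m)] t) := by
  have hM := nodup_elongB hBp hy hB
  rw [evolve3_pair_singleton]
  rcases (by omega : t ≤ m ∨ (m < t ∧ t ≤ 2 * m) ∨ 2 * m < t) with h | h | h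
  · exact oneRepeat_of_snd_mem hM (mem_elongB.2 (Or.inl (by omega)))
      (not_mem_elongB hy hB (by omega)) (not_mem_elongB hy hB (by omega)) (by omega)
  · exact oneRepeat_of_last_mem hM (mem_elongB.2 (Or.inr (Or.inr (by omega))))
      (not_mem_elongB hy hB (by omega)) (not_mem_elongB hy hB (by omega)) (by omega)
  · exact oneRepeat_of_fst_mem hM (mem_elongB.2 (Or.inl (by omega)))
      (not_mem_elongB hy hB (by omega)) (not_mem_elongB hy hB (by omega)) (by omega)

theorem oneRepeat_evolve3_elongB_of_ge (hBp : B.Pairwise (· > ·))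
    (hy : 0 < y) (hB : ∀ b ∈ B, -y + m < b ∧ b < y) {t : ℤ} (ht₀ : 2 * y + 4 * m ≤ t)
    (ht : t ≤ 2 * y + 7 * m - 1) :
    OneRepeat (evolve3 [y + 5 * m, y + 3 * m] (elongB y m B) [-(y + 3 * m)] t) := by
  have hM := nodup_elongB hBp hy hB
  rw [evolve3_pair_singleton]
  rcases (by omega : t < 2 * y + 5 * m ∨ (2 * y + 5 * m ≤ t ∧ t < 2 * y + 6 * m) ∨
    2 * y + 6 * m ≤ t) with h | h | h
  · exact oneRepeat_of_snd_mem hM (mem_elongB.2 (Or.inr (Or.inr (by omega))))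
      (not_mem_elongB hy hB (by omega)) (not_mem_elongB hy hB (by omega)) (by omega)
  · exact oneRepeat_of_last_mem hM (mem_elongB.2 (Or.inl (by omega)))
      (not_mem_elongB hy hB (by omega)) (not_mem_elongB hy hB (by omega)) (by omega)
  · exact oneRepeat_of_fst_mem hM (mem_elongB.2 (Or.inr (Or.inr (by omega))))
      (not_mem_elongB hy hB (by omega)) (not_mem_elongB hy hB (by omega)) (by omega)

theorem oneRepeat_evolve3_elongB_add (hB : ∀ b ∈ B, -y + m < b ∧ b < y) {s : ℤ}
    (hs₀ : 1 ≤ s) (hs : s ≤ 2 * y + m - 1) (hP : OneRepeat (evolve3 [y + 2 * m, y] B [-y] s)) :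
    OneRepeat (evolve3 [y + 5 * m, y + 3 * m] (elongB y m B) [-(y + 3 * m)] (s + 3 * m)) := by
  set E₁ := descRun (y + 3 * m - 1) m
  set E₂ := descRun (-y - m) m
  have hE : (E₁ ++ E₂).Nodup := by
    refine List.Nodup.append (pairwise_descRun.imp ne_of_gt) (pairwise_descRun.imp ne_of_gt)
      fun a ha hb => ?_
    have := mem_descRun.1 ha
    have := mem_descRun.1 hb
    omega
  have hdisj : (E₁ ++ E₂).Disjoint ([y + 2 * m - s, y - s] ++ B ++ [-y + s]) := by
    intro x hxE hx
    simp only [List.mem_append, List.mem_cons, List.not_mem_nil, or_false] at hx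
    have hxE' : (y + 2 * m ≤ x ∧ x < y + 3 * m) ∨ (-y - 2 * m < x ∧ x ≤ -y - m) := by
      rcases List.mem_append.1 hxE with h | h
      · exact Or.inl (by have := mem_descRun.1 h; omega)
      · exact Or.inr (by have := mem_descRun.1 h; omega)
    rcases hx with ((h | h) | h) | h
    · omega
    · omega
    · have := hB x h
      omega
    · omega
  have h₁ : y + 5 * m - (s + 3 * m) = y + 2 * m - s := by ring
  have h₂ : y + 3 * m - (s + 3 * m) = y - s := by ring
  have h₃ : -(y + 3 * m) + (s + 3 * m) = -y + s := by ring
  rw [evolve3_pair_singleton] at hP ⊢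
  rw [h₁, h₂, h₃, elongB_eq_descRun]
  exact (hP.append_left hE hdisj).of_perm (perm_append_pair_append_append _ _)

theorem IsUlrich3.elong (hP : IsUlrich3 [y + 2 * m, y] B [-y])
    (hdim : (dim3 [y + 2 * m, y] B [-y] : ℤ) = 2 * y + m - 1) :
    IsUlrich3 [y + 5 * m, y + 3 * m] (elongB y m B) [-(y + 3 * m)] ∧
      (dim3 [y + 5 * m, y + 3 * m] (elongB y m B) [-(y + 3 * m)] : ℤ) =
        2 * (y + 3 * m) + m - 1 := by
  have hdec := hP.2.2.1
  rw [evolve3_pair_singleton, strictDec_pair_append_singleton_iff] at hdec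
  simp only [sub_zero, add_zero] at hdec
  obtain ⟨hm, hBp, hBy, -, hy⟩ := hdec
  have hB : ∀ b ∈ B, -y + m < b ∧ b < y := fun b hb =>
    ⟨by have := hP.sub_dim3_le_of_mem hb; omega, hBy b hb⟩
  rw [dim3_pair_singleton] at hdim
  have hdim' : (dim3 [y + 5 * m, y + 3 * m] (elongB y m B) [-(y + 3 * m)] : ℤ) =
      2 * (y + 3 * m) + m - 1 := by
    rw [dim3_pair_singleton, length_elongB]
    push_cast
    omega
  refine ⟨⟨List.cons_ne_nil _ _, List.cons_ne_nil _ _, ?_, fun t ht₀ ht => ?_⟩, hdim'⟩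
  · rw [evolve3_pair_singleton, strictDec_pair_append_singleton_iff]
    simp only [sub_zero, add_zero]
    exact ⟨by omega, pairwise_elongB hBp (by omega) hB,
      fun x hx => by have := bounds_of_mem_elongB (by omega) hB hx; omega,
      fun x hx => by have := bounds_of_mem_elongB (by omega) hB hx; omega, by omega⟩
  · replace ht : (t : ℤ) ≤ 2 * y + 7 * m - 1 := by
      have : (t : ℤ) ≤ _ := Nat.cast_le.2 ht
      omega
    rcases (by omega : t ≤ 3 * m ∨ (3 * m < t ∧ (t : ℤ) < 2 * y + 4 * m) ∨
      2 * y + 4 * m ≤ (t : ℤ)) with h | ⟨h₀, h⟩ | h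
    · exact oneRepeat_evolve3_elongB_of_le hBp (by omega) hB (by omega) (by omega)
    · obtain ⟨s, rfl⟩ : ∃ s, t = s + 3 * m := ⟨t - 3 * m, by omega⟩
      push_cast
      exact oneRepeat_evolve3_elongB_add hB (by omega) (by omega)
        (hP.2.2.2 s (by omega) (by rw [dim3_pair_singleton]; omega))
    · exact oneRepeat_evolve3_elongB_of_ge hBp (by omega) hB h ht

end Elongation

theorem mem_Fb {m : ℕ} {x : ℤ} : x ∈ Fb m ↔ 0 < x ∧ x < m := by
  rw [Fb_eq_descRun, mem_descRun]
  omega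

theorem isUlrich3_fundamental {m : ℕ} (hm : 0 < m) :
    IsUlrich3 [m + 2 * m, m] (Fb m) [-m] := by
  have hF : (Fb m).Pairwise (· > ·) := Fb_eq_descRun m ▸ pairwise_descRun
  have hM : (Fb m).Nodup := hF.imp ne_of_gt
  have hnot {x : ℤ} (hx : x ≤ 0 ∨ m ≤ x) : x ∉ Fb m := fun h => by
    have := mem_Fb.1 h
    omega
  refine ⟨List.cons_ne_nil _ _, List.cons_ne_nil _ _, ?_, fun t ht₀ ht => ?_⟩
  · rw [evolve3_pair_singleton, strictDec_pair_append_singleton_iff]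
    simp only [sub_zero, add_zero]
    exact ⟨by omega, hF, fun x hx => by have := mem_Fb.1 hx; omega,
      fun x hx => by have := mem_Fb.1 hx; omega, by omega⟩
  · rw [dim3_pair_singleton, Fb_eq_descRun, length_descRun] at ht
    rw [evolve3_pair_singleton]
    rcases (by omega : t < m ∨ t = m ∨ (m < t ∧ t < 2 * m) ∨ t = 2 * m ∨ 2 * m < t) with
      h | h | h | h | h
    · exact oneRepeat_of_snd_mem hM (mem_Fb.2 (by omega)) (hnot (by omega)) (hnot (by omega))
        (by omega)
    · exact oneRepeat_of_mem_pair_append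
        (nodup_pair_append hM (hnot (by omega)) (hnot (by omega)) (by omega)) (by simp; omega)
    · exact oneRepeat_of_last_mem hM (mem_Fb.2 (by omega)) (hnot (by omega)) (hnot (by omega))
        (by omega)
    · exact oneRepeat_of_mem_pair_append
        (nodup_pair_append hM (hnot (by omega)) (hnot (by omega)) (by omega)) (by simp; omega)
    · exact oneRepeat_of_fst_mem hM (mem_Fb.2 (by omega)) (hnot (by omega)) (hnot (by omega))
        (by omega)

theorem length_EkB (m k : ℕ) : (EkB m k).length = 2 * m * k + m - 1 := by
  induction k with
  | zero => simp [EkB, Fb_eq_descRun, length_descRun]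
  | succ k ih =>
    rw [EkB, length_elongB, ih, mul_add, mul_one]
    generalize 2 * m * k = q
    omega

theorem isUlrich3_Ek {m : ℕ} (hm : 0 < m) (k : ℕ) : IsUlrich3 (EkA m k) (EkB m k) (EkC m k) := by
  induction k with
  | zero => simpa [EkA, EkB, EkC, yk] using isUlrich3_fundamental hm
  | succ k ih =>
    have hdim : (dim3 (EkA m k) (EkB m k) (EkC m k) : ℤ) = 2 * yk m k + m - 1 := by
      rw [EkA, EkC, dim3_pair_singleton, length_EkB, yk]
      push_cast [Nat.cast_sub (by nlinarith : 1 ≤ 2 * m * k + m)]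
      ring
    have hyk : yk m (k + 1) = yk m k + 3 * m := by
      simp only [yk]
      push_cast
      ring
    have h₅ : yk m k + 3 * m + 2 * m = yk m k + 5 * m := by ring
    rw [EkA, EkB, EkC, hyk, h₅]
    exact (ih.elong hdim).1

/-- If `P = (y+2m, y | b₁, ..., bₙ | -y)` is an Ulrich partition of type `(2, n, 1)` of
dimension `2y + m - 1`, then its elongation `E(P)` is an Ulrich partition of type
`(2, n+2m, 1)` of dimension `2(y+3m) + m - 1`.  Consequently `E^k(F_m)` is Ulrich of type
`(2, 2mk + m - 1, 1)` for all `k ≥ 0`. -/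
theorem stmt18 :
    (∀ (m : ℕ) (y : ℤ) (B : List ℤ), 0 < m →
      IsUlrich3 [y + 2 * m, y] B [-y] →
      (dim3 [y + 2 * m, y] B [-y] : ℤ) = 2 * y + m - 1 →
      IsUlrich3 [y + 5 * m, y + 3 * m] (elongB y m B) [-(y + 3 * m)] ∧
        (dim3 [y + 5 * m, y + 3 * m] (elongB y m B) [-(y + 3 * m)] : ℤ)
          = 2 * (y + 3 * m) + m - 1) ∧
    (∀ (m k : ℕ), 0 < m →
      IsUlrich3 (EkA m k) (EkB m k) (EkC m k) ∧ (EkB m k).length = 2 * m * k + m - 1) :=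
  ⟨fun _ _ _ _ hP hdim => hP.elong hdim, fun m k hm => ⟨isUlrich3_Ek hm k, length_EkB m k⟩⟩
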